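/- Let E be a real inner product space, let A and B be finite index sets with equal cardinality |A| = |B|, and let u : A → E and v : B → E be families of vectors. Then ‖Σ_{a∈A} u(a) − Σ_{b∈B} v(b)‖² ≤ Σ_{a∈A} Σ_{b∈B} ‖u(a) − v(b)‖². -/

import Mathlib

open Finset

theorem norm_sum_sq_le_card_mul_sum_norm_sq {E ι : Type*} [SeminormedAddCommGroup E]
    (s : Finset ι) (w : ι → E) :
    ‖∑ i ∈ s, w i‖ ^ 2 ≤ #s * ∑ i ∈ s, ‖w i‖ ^ 2 :=
  calc ‖∑ i ∈ s, w i‖ ^ 2 ≤ (∑ i ∈ s, ‖w i‖) ^ 2 := by gcongr; exact norm_sum_le _ _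
    _ ≤ #s * ∑ i ∈ s, ‖w i‖ ^ 2 := sq_sum_le_card_mul_sum_sq

theorem sum_sum_norm_sub_sq {E α β : Type*} [NormedAddCommGroup E] [InnerProductSpace ℝ E]
    (A : Finset α) (B : Finset β) (u : α → E) (v : β → E) :
    ∑ a ∈ A, ∑ b ∈ B, ‖u a - v b‖ ^ 2 =
      #B * ∑ a ∈ A, ‖u a‖ ^ 2 + #A * ∑ b ∈ B, ‖v b‖ ^ 2 -
        2 * inner ℝ (∑ a ∈ A, u a) (∑ b ∈ B, v b) := by
  simp only [norm_sub_sq_real, sum_add_distrib, sum_sub_distrib, sum_const, nsmul_eq_mul,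
    sum_inner, inner_sum, mul_sum]
  rw [sum_comm (s := B)]
  ring

/-- For two families of vectors indexed by finite sets of equal cardinality, the
squared distance between the sums is bounded by the sum of squared pairwise
distances: `‖Σ_A u - Σ_B v‖² ≤ Σ_{a∈A} Σ_{b∈B} ‖u a - v b‖²`. -/
theorem norm_sum_sub_sum_sq_le {E : Type*} [NormedAddCommGroup E]
    [InnerProductSpace ℝ E] {α β : Type*} (A : Finset α) (B : Finset β)
    (u : α → E) (v : β → E) (hcard : A.card = B.card) :
    ‖(∑ a ∈ A, u a) - ∑ b ∈ B, v b‖ ^ 2 ≤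
      ∑ a ∈ A, ∑ b ∈ B, ‖u a - v b‖ ^ 2 := by
  have hu := norm_sum_sq_le_card_mul_sum_norm_sq A u
  have hv := norm_sum_sq_le_card_mul_sum_norm_sq B v
  rw [hcard] at hu
  rw [sum_sum_norm_sub_sq, norm_sub_sq_real, hcard]
  linarith
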